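/- arXiv:2007.05761 — 14 statements merged into one kernel-verified Lean document; each statement's English description precedes it below -/
import Mathlib

section
/- Let S be a non-empty sub-heap of a heap H. For every a ∈ H, the equivalence class ā = {z ∈ H : z ∼_S a} is a sub-heap of H; moreover, if S is a normal sub-heap, then ā is a normal sub-heap. -/
/-- A ternary operation is a heap operation if it is associative and satisfies
the Mal'cev identities. -/
def IsHeap {T : Type*} (br : T → T → T → T) : Prop :=
  (∀ a b c d e : T, br (br a b c) d e = br a b (br c d e)) ∧
  (∀ a b : T, br a a b = b) ∧
  (∀ a b : T, br b a a = b)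

/-- A subset `S` is a sub-heap if it is closed under the ternary operation. -/
def IsSubHeap {T : Type*} (br : T → T → T → T) (S : Set T) : Prop :=
  ∀ a ∈ S, ∀ b ∈ S, ∀ c ∈ S, br a b c ∈ S

/-- The sub-heap relation `a ∼_S b` : `[a,b,s] ∈ S` for all `s ∈ S`. -/
def SRel {T : Type*} (br : T → T → T → T) (S : Set T) (a b : T) : Prop :=
  ∀ s ∈ S, br a b s ∈ S

/-- The equivalence class of `a` under the sub-heap relation `∼_S`. -/
def Cls {T : Type*} (br : T → T → T → T) (S : Set T) (a : T) : Set T :=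
  {z | SRel br S z a}

/-- A sub-heap `S` is normal if `[[a,e,s],a,e] ∈ S` for all `a` and all `e, s ∈ S`. -/
def IsNormalSubHeap {T : Type*} (br : T → T → T → T) (S : Set T) : Prop :=
  IsSubHeap br S ∧ ∀ a : T, ∀ e ∈ S, ∀ s ∈ S, br (br a e s) a e ∈ S

/-- Every equivalence class of the sub-heap relation `∼_S` is a sub-heap; moreover,
if `S` is a normal sub-heap, then every equivalence class is a normal sub-heap. -/
theorem cls_isSubHeap {H : Type*} (br : H → H → H → H) (hH : IsHeap br)
    (S : Set H) (hS : IsSubHeap br S) (hne : S.Nonempty) (a : H) :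
    IsSubHeap br (Cls br S a) ∧
    (IsNormalSubHeap br S → IsNormalSubHeap br (Cls br S a)) := by
  obtain ⟨A, M1, M2⟩ := hH
  obtain ⟨e0, he0⟩ := hne
  -- auxiliary identity
  have N : ∀ b c d e : H, br b (br d c b) e = br c d e := by
    intro b c d e
    have hb : br c d (br d c b) = b := by rw [← A, M2, M1]
    calc br b (br d c b) e = br (br c d (br d c b)) (br d c b) e := by rw [hb]
      _ = br c d (br (br d c b) (br d c b) e) := A _ _ _ _ _
      _ = br c d e := by rw [M1]
  -- middle (para-)associativity
  have MA : ∀ p b c d e : H, br p (br d c b) e = br p b (br c d e) := by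
    intro p b c d e
    have hp : br (br p b c) c b = p := by rw [A, M1, M2]
    calc br p (br d c b) e = br (br (br p b c) c b) (br d c b) e := by rw [hp]
      _ = br (br p b c) c (br b (br d c b) e) := A _ _ _ _ _
      _ = br (br p b c) c (br c d e) := by rw [N]
      _ = br (br (br p b c) c c) d e := (A _ _ _ _ _).symm
      _ = br p b (br c d e) := by rw [M2, A]
  -- cancellation
  have C1 : ∀ x y z t : H, br x y (br y z t) = br x z t := by
    intro x y z t; rw [← A, M2]
  -- membership test at a single point e0
  have memS : ∀ z : H, br z a e0 ∈ S → ∀ t ∈ S, br z a t ∈ S := by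
    intro z hz t ht
    have h : br z a t = br (br z a e0) e0 t := by rw [A, M1]
    rw [h]; exact hS _ hz _ he0 _ ht
  have hsub : IsSubHeap br (Cls br S a) := by
    intro x hx y hy z hz
    simp only [Cls, Set.mem_setOf_eq, SRel] at hx hy hz ⊢
    apply memS
    have key : br (br x y z) a e0 = br (br x a e0) (br y a e0) (br z a e0) := by
      simp [A, MA, C1, M1, M2]
    rw [key]
    exact hS _ (hx e0 he0) _ (hy e0 he0) _ (hz e0 he0)
  refine ⟨hsub, fun hN => ⟨hsub, ?_⟩⟩
  intro x e he s hs
  simp only [Cls, Set.mem_setOf_eq, SRel] at he hs ⊢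
  apply memS
  have key : br (br (br x e s) x e) a e0
      = br (br (br x a e0) (br e a e0) (br s a e0)) (br x a e0) (br e a e0) := by
    simp [A, MA, C1, M1, M2]
  rw [key]
  exact hN.2 (br x a e0) _ (he e0 he0) _ (hs e0 he0)
end

section
/- Let S be a non-empty sub-heap of a heap H and a ∈ H. Then the sub-heap relation ∼_S coincides with the sub-heap relation ∼_{ā} associated to the equivalence class ā = {z ∈ H : z ∼_S a} (which is itself a non-empty sub-heap): for all b,c ∈ H, b ∼_S c if and only if b ∼_{ā} c. -/
/-- The sub-heap relation `∼_S` coincides with the sub-heap relation `∼_{ā}`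
associated to the equivalence class `ā` of any `a ∈ H`. -/
theorem srel_eq_srel_cls {H : Type*} (br : H → H → H → H) (hH : IsHeap br)
    (S : Set H) (hS : IsSubHeap br S) (hne : S.Nonempty) (a : H) :
    ∀ b c : H, SRel br S b c ↔ SRel br (Cls br S a) b c := by
  obtain ⟨hassoc, hml, _⟩ := hH
  intro b c
  constructor
  · intro h t ht s hs
    show br (br b c t) a s ∈ S
    rw [hassoc]
    exact h _ (ht s hs)
  · intro h s hs
    have ha : a ∈ Cls br S a := fun s hs => by
      show br a a s ∈ S
      rw [hml]; exact hs
    have := h a ha s hs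
    show br b c s ∈ S
    rw [show br (br b c a) a s = br b c s from by rw [hassoc, hml]] at this
    exact this
end

section
/- A non-empty normal sub-heap P of a pre-truss T is a paragon if and only if for all a,b ∈ T and all p,e ∈ P, both [a·[p,e,b], a·b, e] ∈ P and [[p,e,b]·a, b·a, e] ∈ P. -/
/-- A sub-heap `S` of a pre-truss is left-closed if `[t·s', t·s, s] ∈ S`. -/
def LeftClosed {T : Type*} [Mul T] (br : T → T → T → T) (S : Set T) : Prop :=
  ∀ s ∈ S, ∀ s' ∈ S, ∀ t : T, br (t * s') (t * s) s ∈ S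

/-- A sub-heap `S` of a pre-truss is right-closed if `[s'·t, s·t, s] ∈ S`. -/
def RightClosed {T : Type*} [Mul T] (br : T → T → T → T) (S : Set T) : Prop :=
  ∀ s ∈ S, ∀ s' ∈ S, ∀ t : T, br (s' * t) (s * t) s ∈ S

/-- A paragon is a non-empty normal sub-heap all of whose `∼_P`-equivalence
classes are closed normal sub-heaps. -/
def IsParagon {T : Type*} [Mul T] (br : T → T → T → T) (P : Set T) : Prop :=
  P.Nonempty ∧ IsNormalSubHeap br P ∧
  ∀ a : T, IsNormalSubHeap br (Cls br P a) ∧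
    LeftClosed br (Cls br P a) ∧ RightClosed br (Cls br P a)

/-- A left ideal: a non-empty normal sub-heap closed under left multiplication. -/
def IsLeftIdeal {T : Type*} [Mul T] (br : T → T → T → T) (I : Set T) : Prop :=
  I.Nonempty ∧ IsNormalSubHeap br I ∧ ∀ t : T, ∀ i ∈ I, t * i ∈ I

/-- A right ideal: a non-empty normal sub-heap closed under right multiplication. -/
def IsRightIdeal {T : Type*} [Mul T] (br : T → T → T → T) (I : Set T) : Prop :=
  I.Nonempty ∧ IsNormalSubHeap br I ∧ ∀ t : T, ∀ i ∈ I, i * t ∈ I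

/-- A (two-sided) ideal. -/
def IsIdeal {T : Type*} [Mul T] (br : T → T → T → T) (I : Set T) : Prop :=
  I.Nonempty ∧ IsNormalSubHeap br I ∧ ∀ t : T, ∀ i ∈ I, t * i ∈ I ∧ i * t ∈ I


section HeapAux

variable {T : Type*} {br : T → T → T → T} {S P : Set T}

lemma heap_cancel (hH : IsHeap br) (a b c d : T) :
    br c (br a b c) d = br b a d := by
  obtain ⟨A, M1, M2⟩ := hH
  have h1 : br a b (br c (br a b c) d) = d := by rw [← A, M1]
  calc br c (br a b c) d
      = br b b (br c (br a b c) d) := (M1 _ _).symm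
    _ = br (br b a a) b (br c (br a b c) d) := by rw [M2]
    _ = br b a (br a b (br c (br a b c) d)) := A _ _ _ _ _
    _ = br b a d := by rw [h1]

lemma heap_I (hH : IsHeap br) (u x y v s : T) :
    br u (br x y v) s = br u v (br y x s) := by
  obtain ⟨A, M1, M2⟩ := hH
  calc br u (br x y v) s
      = br (br u v v) (br x y v) s := by rw [M2]
    _ = br u v (br v (br x y v) s) := A _ _ _ _ _
    _ = br u v (br y x s) := by rw [heap_cancel ⟨A, M1, M2⟩]

lemma srel_refl (hH : IsHeap br) (a : T) : SRel br S a a := by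
  intro s hs
  rw [hH.2.1]
  exact hs

lemma srel_of_mem (hH : IsHeap br) (hS : IsSubHeap br S) {s₀ : T} (hs₀ : s₀ ∈ S)
    {a b : T} (h : br a b s₀ ∈ S) : SRel br S a b := by
  obtain ⟨A, M1, M2⟩ := hH
  intro s hs
  have : br a b s = br (br a b s₀) s₀ s := by rw [A, M1]
  rw [this]
  exact hS _ h _ hs₀ _ hs

lemma srel_symm (hH : IsHeap br) (hS : IsSubHeap br S) {a b : T}
    (h : SRel br S a b) : SRel br S b a := by
  intro s hs
  have key : br b a s = br s (br a b s) s := (heap_cancel hH a b s s).symm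
  rw [key]
  exact hS _ hs _ (h s hs) _ hs

lemma srel_trans (hH : IsHeap br) {a b c : T}
    (h1 : SRel br S a b) (h2 : SRel br S b c) : SRel br S a c := by
  intro s hs
  have : br a c s = br a b (br b c s) := by rw [← hH.1, hH.2.2]
  rw [this]
  exact h1 _ (h2 s hs)

lemma srel_cong1 (hH : IsHeap br) (hS : IsSubHeap br S) {x a : T}
    (h : SRel br S x a) (y z : T) : SRel br S (br x y z) (br a y z) := by
  obtain ⟨A, M1, M2⟩ := hH
  intro s hs
  have key : br (br x y z) (br a y z) s = br x a s := by
    calc br (br x y z) (br a y z) s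
        = br x y (br z (br a y z) s) := A _ _ _ _ _
      _ = br x y (br y a s) := by rw [heap_cancel ⟨A, M1, M2⟩]
      _ = br (br x y y) a s := (A _ _ _ _ _).symm
      _ = br x a s := by rw [M2]
  rw [key]
  exact h s hs

lemma srel_cong3 (hH : IsHeap br) (hP : IsNormalSubHeap br P) {u v : T}
    (h : SRel br P u v) (x y : T) : SRel br P (br x y u) (br x y v) := by
  obtain ⟨A, M1, M2⟩ := hH
  intro s hs
  have hq : br u v s ∈ P := h s hs
  have e1 : br (br x y u) (br x y v) s = br x y (br u v (br y x s)) := by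
    rw [A, heap_I ⟨A, M1, M2⟩]
  have e2 : br (br (br x y s) s (br u v s)) (br x y s) s
      = br x y (br u v (br y x s)) := by
    calc br (br (br x y s) s (br u v s)) (br x y s) s
        = br (br x y s) s (br (br u v s) (br x y s) s) := A _ _ _ _ _
      _ = br (br x y s) s (br (br u v s) s (br y x s)) := by
          rw [heap_I ⟨A, M1, M2⟩ (br u v s) x y s s]
      _ = br x y (br s s (br (br u v s) s (br y x s))) := A _ _ _ _ _
      _ = br x y (br (br u v s) s (br y x s)) := by rw [M1]
      _ = br x y (br u v (br s s (br y x s))) := by rw [A]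
      _ = br x y (br u v (br y x s)) := by rw [M1]
  rw [e1, ← e2]
  exact hP.2 (br x y s) s hs (br u v s) hq

end HeapAux

/-- A non-empty normal sub-heap `P` of a pre-truss `T` is a paragon iff for all
`a, b ∈ T` and `p, e ∈ P`, both `[a·[p,e,b], a·b, e] ∈ P` and
`[[p,e,b]·a, b·a, e] ∈ P`. -/
theorem isParagon_iff {T : Type*} [Mul T] (br : T → T → T → T) (hH : IsHeap br)
    (hmul : ∀ a b c : T, a * b * c = a * (b * c))
    (P : Set T) (hne : P.Nonempty) (hP : IsNormalSubHeap br P) :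
    IsParagon br P ↔
      ∀ a b : T, ∀ p ∈ P, ∀ e ∈ P,
        br (a * br p e b) (a * b) e ∈ P ∧ br (br p e b * a) (b * a) e ∈ P := by
  have A := hH.1
  have M1 := hH.2.1
  have M2 := hH.2.2
  constructor
  · rintro ⟨-, -, hcls⟩ a b p hp e he
    have hzb : br (br p e b) b e ∈ P := by
      have : br (br p e b) b e = p := by rw [A, M1, M2]
      rw [this]; exact hp
    have hz : SRel br P (br p e b) b := srel_of_mem hH hP.1 he hzb
    have hb : SRel br P b b := srel_refl hH b
    obtain ⟨-, hLC, hRC⟩ := hcls b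
    constructor
    · have h1 : br (a * br p e b) (a * b) b ∈ Cls br P b := hLC b hb _ hz a
      have h2 := h1 e he
      have eq : br (br (a * br p e b) (a * b) b) b e
          = br (a * br p e b) (a * b) e := by rw [A, M1]
      rwa [eq] at h2
    · have h1 : br (br p e b * a) (b * a) b ∈ Cls br P b := hRC b hb _ hz a
      have h2 := h1 e he
      have eq : br (br (br p e b * a) (b * a) b) b e
          = br (br p e b * a) (b * a) e := by rw [A, M1]
      rwa [eq] at h2
  · intro hstar
    refine ⟨hne, hP, fun a => ?_⟩
    have hsub := hP.1
    have key : ∀ x ∈ Cls br P a, ∀ y ∈ Cls br P a, SRel br P x y := by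
      intro x hx y hy
      exact srel_trans hH hx (srel_symm hH hsub hy)
    refine ⟨⟨?_, ?_⟩, ?_, ?_⟩
    · -- sub-heap
      intro x hx y hy z hz
      have h1 : SRel br P (br x y z) (br a y z) := srel_cong1 hH hsub hx y z
      have h2 : SRel br P (br a y z) z := by
        intro s hs
        have eq : br (br a y z) z s = br a y s := by rw [A, M1]
        rw [eq]
        exact (srel_symm hH hsub hy) s hs
      exact srel_trans hH (srel_trans hH h1 h2) hz
    · -- normal
      intro t e' he' s' hs'
      have hu : SRel br P (br s' t e') (br e' t e') :=
        srel_cong1 hH hsub (key s' hs' e' he') t e'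
      have h3 : SRel br P (br t e' (br s' t e')) (br t e' (br e' t e')) :=
        srel_cong3 hH hP hu t e'
      have eqe : br t e' (br e' t e') = e' := by rw [← A, M2, M1]
      have eqw : br (br t e' s') t e' = br t e' (br s' t e') := A _ _ _ _ _
      rw [eqe] at h3
      rw [← eqw] at h3
      exact srel_trans hH h3 he'
    · -- left closed
      intro s hs s' hs' t
      have hss' : SRel br P s' s := key s' hs' s hs
      have h4 : SRel br P (br (t * s') (t * s) s) s := by
        intro e heP
        have hp' : br s' s e ∈ P := hss' e heP
        have eq1 : br (br s' s e) e s = s' := by rw [A, M1, M2]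
        have h5 := (hstar t s (br s' s e) hp' e heP).1
        rw [eq1] at h5
        have eq2 : br (br (t * s') (t * s) s) s e = br (t * s') (t * s) e := by
          rw [A, M1]
        rw [eq2]
        exact h5
      exact srel_trans hH h4 hs
    · -- right closed
      intro s hs s' hs' t
      have hss' : SRel br P s' s := key s' hs' s hs
      have h4 : SRel br P (br (s' * t) (s * t) s) s := by
        intro e heP
        have hp' : br s' s e ∈ P := hss' e heP
        have eq1 : br (br s' s e) e s = s' := by rw [A, M1, M2]
        have h5 := (hstar t s (br s' s e) hp' e heP).2
        rw [eq1] at h5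
        have eq2 : br (br (s' * t) (s * t) s) s e = br (s' * t) (s * t) e := by
          rw [A, M1]
        rw [eq2]
        exact h5
      exact srel_trans hH h4 hs
end

section
/- A non-empty normal sub-heap P of a near-truss T is a paragon if and only if P is left-closed and every equivalence class of the sub-heap relation ∼_P is right-closed. -/
/-! Fix `e ∈ P`. The heap becomes a group with `x * y = [x, e, y]`, unit `e` and `[a, b, c] = a b⁻¹ c`,
in which `P` is a normal subgroup and the `∼_P`-classes are its cosets `P a`; cosets of a normal
subgroup are normal sub-heaps, and the coset of `e` is `P` itself. For left-closedness of a coset,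
write `s' = [p, e, s]` with `p ∈ P`: left distributivity turns `[t s', t s, s]` into
`[t p, t e, e] * s`, and `[t p, t e, e] ∈ P` is left-closedness of `P`. -/

section

variable {T : Type*} {br : T → T → T → T}

def HeapRetract (_ : IsHeap br) (_ : T) : Type _ := T

namespace HeapRetract

def toRetract (hH : IsHeap br) (e : T) : T ≃ HeapRetract hH e := Equiv.refl T

variable {hH : IsHeap br} {e : T}

instance : One (HeapRetract hH e) := ⟨toRetract hH e e⟩

instance : Mul (HeapRetract hH e) := ⟨fun x y => toRetract hH e (br x e y)⟩

instance : Inv (HeapRetract hH e) := ⟨fun x => toRetract hH e (br e x e)⟩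

instance : Group (HeapRetract hH e) :=
  Group.ofLeftAxioms (fun a b c => hH.1 a e b e c) (fun a => hH.2.1 e a)
    (fun a => by
      obtain ⟨a, rfl⟩ := (toRetract hH e).surjective a
      show br (br e a e) e a = e
      rw [hH.1, hH.2.1, hH.2.2])

theorem toRetract_self : toRetract hH e e = 1 := rfl

theorem toRetract_br (a b c : T) :
    toRetract hH e (br a b c) = toRetract hH e a * (toRetract hH e b)⁻¹ * toRetract hH e c := by
  show br a b c = br (br a e (br e b e)) e c
  rw [← hH.1 a e e b e, hH.2.2, hH.1, hH.2.1]

variable (hH) {P : Set T}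

def subgroup (hP : IsSubHeap br P) (he : e ∈ P) : Subgroup (HeapRetract hH e) where
  carrier := (toRetract hH e).symm ⁻¹' P
  mul_mem' hx hy := hP _ hx e he _ hy
  one_mem' := he
  inv_mem' hx := hP e he _ hx e he

theorem toRetract_mem_subgroup (hP : IsSubHeap br P) (he : e ∈ P) (x : T) :
    toRetract hH e x ∈ subgroup hH hP he ↔ x ∈ P := Iff.rfl

theorem normal_subgroup (hP : IsNormalSubHeap br P) (he : e ∈ P) :
    (subgroup hH hP.1 he).Normal where
  conj_mem n hn g := by
    obtain ⟨g, rfl⟩ := (toRetract hH e).surjective g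
    obtain ⟨n, rfl⟩ := (toRetract hH e).surjective n
    have h := (toRetract_mem_subgroup hH hP.1 he _).mpr (hP.2 g e he n hn)
    rw [toRetract_br, toRetract_br, toRetract_self] at h
    simpa only [inv_one, mul_one] using h

theorem mem_cls_iff (hP : IsSubHeap br P) (he : e ∈ P) {a z : T} :
    z ∈ Cls br P a ↔ toRetract hH e z * (toRetract hH e a)⁻¹ ∈ subgroup hH hP he := by
  refine ⟨fun h => ?_, fun h s hs => ?_⟩
  · simpa only [toRetract_br, toRetract_self, mul_one] using
      (toRetract_mem_subgroup hH hP he _).mpr (h e he)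
  · rw [← toRetract_mem_subgroup hH hP he, toRetract_br]
    exact mul_mem h hs

end HeapRetract

open HeapRetract

theorem cls_eq_of_mem (hH : IsHeap br) {P : Set T} (hP : IsSubHeap br P) {e : T} (he : e ∈ P) :
    Cls br P e = P := by
  ext z
  refine ⟨fun hz => hH.2.2 e z ▸ hz e he, fun hz s hs => hP z hz e he s hs⟩

theorem isSubHeap_cls (hH : IsHeap br) {P : Set T} (hP : IsSubHeap br P) (hne : P.Nonempty)
    (a : T) : IsSubHeap br (Cls br P a) := by
  obtain ⟨e, he⟩ := hne
  intro x hx y hy z hz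
  simp only [mem_cls_iff hH hP he] at hx hy hz ⊢
  rw [toRetract_br]
  convert mul_mem (mul_mem hx (inv_mem hy)) hz using 1
  group

theorem isNormalSubHeap_cls (hH : IsHeap br) {P : Set T} (hP : IsNormalSubHeap br P)
    (hne : P.Nonempty) (a : T) : IsNormalSubHeap br (Cls br P a) := by
  refine ⟨isSubHeap_cls hH hP.1 hne a, fun t q hq s hs => ?_⟩
  obtain ⟨e, he⟩ := hne
  have hN := normal_subgroup hH hP he
  simp only [mem_cls_iff hH hP.1 he] at hq hs ⊢
  have hqs : (toRetract hH e q)⁻¹ * toRetract hH e s ∈ subgroup hH hP.1 he := by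
    convert hN.conj_mem' _ (mul_mem (inv_mem hq) hs) (toRetract hH e a) using 1
    group
  rw [toRetract_br, toRetract_br]
  convert mul_mem (hN.conj_mem _ hqs (toRetract hH e t)) hq using 1
  group

theorem leftClosed_cls [Mul T] (hH : IsHeap br)
    (hdistrib : ∀ a b c d : T, a * br b c d = br (a * b) (a * c) (a * d))
    {P : Set T} (hP : IsSubHeap br P) (hne : P.Nonempty) (hLC : LeftClosed br P) (a : T) :
    LeftClosed br (Cls br P a) := by
  obtain ⟨e, he⟩ := hne
  intro s hs s' hs' t
  simp only [mem_cls_iff hH hP he] at hs hs' ⊢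
  have hp : br s' s e ∈ P := by
    rw [← toRetract_mem_subgroup hH hP he, toRetract_br, toRetract_self]
    convert mul_mem hs' (inv_mem hs) using 1
    group
  have hs'_eq : s' = br (br s' s e) e s := by rw [hH.1, hH.2.1, hH.2.2]
  have htp := (toRetract_mem_subgroup hH hP he _).mpr (hLC e he _ hp t)
  rw [hs'_eq, hdistrib]
  simp only [toRetract_br, toRetract_self] at htp ⊢
  convert mul_mem htp hs using 1
  group

end

theorem isParagon_iff_nearTruss_general {T : Type*} [Mul T] (br : T → T → T → T)
    (hH : IsHeap br)
    (hdistrib : ∀ a b c d : T, a * br b c d = br (a * b) (a * c) (a * d))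
    (P : Set T) (hne : P.Nonempty) (hP : IsNormalSubHeap br P) :
    IsParagon br P ↔
      LeftClosed br P ∧ ∀ a : T, RightClosed br (Cls br P a) := by
  refine ⟨fun h => ⟨?_, fun a => (h.2.2 a).2.2⟩, fun ⟨hLC, hRC⟩ => ⟨hne, hP, fun a =>
    ⟨isNormalSubHeap_cls hH hP hne a, leftClosed_cls hH hdistrib hP.1 hne hLC a, hRC a⟩⟩⟩
  obtain ⟨e, he⟩ := hne
  simpa only [cls_eq_of_mem hH hP.1 he] using (h.2.2 e).2.1

/-- A non-empty normal sub-heap `P` of a near-truss `T` is a paragon iff `P` is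
left-closed and every equivalence class of `∼_P` is right-closed. -/
theorem isParagon_iff_nearTruss {T : Type*} [Mul T] (br : T → T → T → T)
    (hH : IsHeap br) (hmul : ∀ a b c : T, a * b * c = a * (b * c))
    (hdistrib : ∀ a b c d : T, a * br b c d = br (a * b) (a * c) (a * d))
    (P : Set T) (hne : P.Nonempty) (hP : IsNormalSubHeap br P) :
    IsParagon br P ↔
      LeftClosed br P ∧ ∀ a : T, RightClosed br (Cls br P a) :=
  isParagon_iff_nearTruss_general br hH hdistrib P hne hP
end

section
/- Let f : T → T' be a homomorphism of pre-trusses, i.e. a map preserving the ternary operations and the multiplications. Then: (a) for every z in the image of f, the preimage f⁻¹({z}) is a paragon in T; (b) if f is surjective and P' is a paragon in T', then f⁻¹(P') is a paragon in T. -/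
/-- For a homomorphism of pre-trusses `f : T → T'`: (a) preimages of singletons of
elements in the image are paragons; (b) if `f` is surjective, preimages of
paragons are paragons. -/
theorem preimage_paragon {T T' : Type*} [Mul T] [Mul T']
    (br : T → T → T → T) (br' : T' → T' → T' → T')
    (hH : IsHeap br) (hmul : ∀ a b c : T, a * b * c = a * (b * c))
    (hH' : IsHeap br') (hmul' : ∀ a b c : T', a * b * c = a * (b * c))
    (f : T → T')
    (hfbr : ∀ a b c : T, f (br a b c) = br' (f a) (f b) (f c))
    (hfmul : ∀ a b : T, f (a * b) = f a * f b) :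
    (∀ z ∈ Set.range f, IsParagon br (f ⁻¹' {z})) ∧
    (Function.Surjective f →
      ∀ P' : Set T', IsParagon br' P' → IsParagon br (f ⁻¹' P')) := by

  obtain ⟨hassoc, hll, hrr⟩ := hH
  obtain ⟨hassoc', hll', hrr'⟩ := hH'
  -- the class of `a` in the preimage is the preimage of the class of `f a`
  have hclsQ : ∀ (Q : Set T'), IsSubHeap br' Q → (f ⁻¹' Q).Nonempty → ∀ a : T,
      Cls br (f ⁻¹' Q) a = f ⁻¹' (Cls br' Q (f a)) := by
    rintro Q hQ ⟨s0, hs0⟩ a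
    ext x
    constructor
    · intro hx s' hs'
      have hb : br' (f x) (f a) (f s0) ∈ Q := by
        have := hx s0 hs0
        rwa [Set.mem_preimage, hfbr] at this
      have heq : br' (br' (f x) (f a) (f s0)) (f s0) s' = br' (f x) (f a) s' := by
        rw [hassoc', hll']
      rw [← heq]
      exact hQ _ hb _ hs0 _ hs'
    · intro hx s hs
      rw [Set.mem_preimage, hfbr]
      exact hx (f s) hs
  -- preimage of a paragon with nonempty preimage is a paragon
  have main : ∀ (Q : Set T'), IsParagon br' Q → (f ⁻¹' Q).Nonempty →
      IsParagon br (f ⁻¹' Q) := by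
    intro Q hQ hne
    obtain ⟨hQne, ⟨hQsub, hQnorm⟩, hQcls⟩ := hQ
    refine ⟨hne, ⟨?_, ?_⟩, ?_⟩
    · intro a ha b hb c hc
      rw [Set.mem_preimage, hfbr]
      exact hQsub _ ha _ hb _ hc
    · intro a e he s hs
      rw [Set.mem_preimage, hfbr, hfbr]
      exact hQnorm _ _ he _ hs
    · intro a
      rw [hclsQ Q hQsub hne a]
      obtain ⟨⟨hCsub, hCnorm⟩, hCl, hCr⟩ := hQcls (f a)
      refine ⟨⟨?_, ?_⟩, ?_, ?_⟩
      · intro x hx y hy z hz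
        rw [Set.mem_preimage, hfbr]
        exact hCsub _ hx _ hy _ hz
      · intro x e he s hs
        rw [Set.mem_preimage, hfbr, hfbr]
        exact hCnorm _ _ he _ hs
      · intro s hs s' hs' t
        rw [Set.mem_preimage, hfbr, hfmul, hfmul]
        exact hCl _ hs _ hs' _
      · intro s hs s' hs' t
        rw [Set.mem_preimage, hfbr, hfmul, hfmul]
        exact hCr _ hs _ hs' _
  -- singletons are paragons in T'
  have hsingle : ∀ z : T', IsParagon br' {z} := by
    intro z
    have hcls : ∀ a : T', Cls br' {z} a = {a} := by
      intro a
      ext x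
      simp only [Cls, SRel, Set.mem_setOf_eq, Set.mem_singleton_iff]
      constructor
      · intro hx
        have h1 := hx z rfl
        have : br' (br' x a z) z a = x := by
          rw [hassoc', hll', hrr']
        rw [← this, h1, hll']
      · rintro rfl s rfl
        exact hll' _ _
    refine ⟨⟨z, rfl⟩, ⟨?_, ?_⟩, ?_⟩
    · rintro a rfl b rfl c rfl
      simp [hll']
    · rintro a e rfl s rfl
      simp only [Set.mem_singleton_iff]
      rw [hrr', hll']
    · intro a
      rw [hcls a]
      refine ⟨⟨?_, ?_⟩, ?_, ?_⟩
      · rintro x rfl y rfl u rfl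
        simp [hll']
      · rintro b e rfl s rfl
        simp only [Set.mem_singleton_iff]
        rw [hrr', hll']
      · rintro s rfl s' rfl t
        simp only [Set.mem_singleton_iff]
        rw [hll']
      · rintro s rfl s' rfl t
        simp only [Set.mem_singleton_iff]
        rw [hll']
  constructor
  · rintro z ⟨t, rfl⟩
    exact main _ (hsingle (f t)) ⟨t, rfl⟩
  · intro hsurj P' hP'
    refine main P' hP' ?_
    obtain ⟨⟨p, hp⟩, -, -⟩ := hP'
    obtain ⟨x, hx⟩ := hsurj p
    exact ⟨x, by simp [Set.mem_preimage, hx, hp]⟩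
end

section
/- Let f : T → T' be a surjective homomorphism of pre-trusses, i.e. a surjective map preserving the ternary operations and the multiplications. If P is a paragon in T, then the image f(P) is a paragon in T'. -/
/-- The image of a paragon under a surjective homomorphism of pre-trusses is a
paragon. -/
theorem image_paragon {T T' : Type*} [Mul T] [Mul T']
    (br : T → T → T → T) (br' : T' → T' → T' → T')
    (hH : IsHeap br) (hmul : ∀ a b c : T, a * b * c = a * (b * c))
    (hH' : IsHeap br') (hmul' : ∀ a b c : T', a * b * c = a * (b * c))
    (f : T → T') (hsurj : Function.Surjective f)
    (hfbr : ∀ a b c : T, f (br a b c) = br' (f a) (f b) (f c))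
    (hfmul : ∀ a b : T, f (a * b) = f a * f b)
    (P : Set T) (hP : IsParagon br P) :
    IsParagon br' (f '' P) := by
  obtain ⟨hassoc, hmal1, hmal2⟩ := hH
  obtain ⟨hassoc', hmal1', hmal2'⟩ := hH'
  obtain ⟨⟨p0, hp0⟩, ⟨hPsub, hPnorm⟩, hcls⟩ := hP
  have himg_sub : ∀ S : Set T, IsSubHeap br S → IsSubHeap br' (f '' S) := by
    rintro S hS _ ⟨a, ha, rfl⟩ _ ⟨b, hb, rfl⟩ _ ⟨c, hc, rfl⟩
    exact ⟨br a b c, hS a ha b hb c hc, hfbr a b c⟩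
  have himg_norm : ∀ S : Set T, IsNormalSubHeap br S → IsNormalSubHeap br' (f '' S) := by
    rintro S ⟨hS, hN⟩
    refine ⟨himg_sub S hS, ?_⟩
    rintro a' _ ⟨e, he, rfl⟩ _ ⟨s, hs, rfl⟩
    obtain ⟨a, rfl⟩ := hsurj a'
    exact ⟨br (br a e s) a e, hN a e he s hs, by rw [hfbr, hfbr]⟩
  have hkey : ∀ a : T, Cls br' (f '' P) (f a) = f '' Cls br P a := by
    intro a
    ext z'
    constructor
    · intro hz'
      obtain ⟨z, rfl⟩ := hsurj z'
      have h1 : br' (f z) (f a) (f p0) ∈ f '' P := hz' (f p0) ⟨p0, hp0, rfl⟩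
      rw [← hfbr] at h1
      obtain ⟨q, hq, hfq⟩ := h1
      refine ⟨br q p0 a, ?_, ?_⟩
      · intro s hs
        have h2 : br (br q p0 a) a s = br q p0 s := by
          rw [hassoc, hmal1]
        rw [h2]
        exact hPsub q hq p0 hp0 s hs
      · rw [hfbr, hfq, hfbr, hassoc', hmal1', hmal2']
    · rintro ⟨z, hz, rfl⟩ s' hs'
      obtain ⟨s, hs, rfl⟩ := hs'
      exact ⟨br z a s, hz s hs, hfbr z a s⟩
  refine ⟨⟨f p0, p0, hp0, rfl⟩, himg_norm P ⟨hPsub, hPnorm⟩, ?_⟩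
  intro a'
  obtain ⟨a, rfl⟩ := hsurj a'
  rw [hkey a]
  obtain ⟨hCnorm, hCleft, hCright⟩ := hcls a
  refine ⟨himg_norm _ hCnorm, ?_, ?_⟩
  · rintro _ ⟨s, hsC, rfl⟩ _ ⟨s', hs'C, rfl⟩ t'
    obtain ⟨t, rfl⟩ := hsurj t'
    exact ⟨br (t * s') (t * s) s, hCleft s hsC s' hs'C t, by rw [hfbr, hfmul, hfmul]⟩
  · rintro _ ⟨s, hsC, rfl⟩ _ ⟨s', hs'C, rfl⟩ t'
    obtain ⟨t, rfl⟩ := hsurj t'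
    exact ⟨br (s' * t) (s * t) s, hCright s hsC s' hs'C t, by rw [hfbr, hfmul, hfmul]⟩
end

section
/- Let P be a non-empty normal sub-heap of a pre-truss T. The sub-heap relation ∼_P is a congruence for the multiplication, i.e. a ∼_P b and c ∼_P d imply a·c ∼_P b·d (equivalently, the canonical surjection T → T/P is a homomorphism of pre-trusses), if and only if P is a paragon. -/
/-- For a non-empty normal sub-heap `P` of a pre-truss `T`, the sub-heap relation
`∼_P` is a congruence for the multiplication iff `P` is a paragon. -/
theorem srel_congruence_iff_paragon {T : Type*} [Mul T] (br : T → T → T → T)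
    (hH : IsHeap br) (hmul : ∀ a b c : T, a * b * c = a * (b * c))
    (P : Set T) (hne : P.Nonempty) (hP : IsNormalSubHeap br P) :
    (∀ a b c d : T, SRel br P a b → SRel br P c d → SRel br P (a * c) (b * d)) ↔
      IsParagon br P := by
  obtain ⟨hA, hL, hR⟩ := hH
  obtain ⟨hPsub, hPnorm⟩ := hP
  obtain ⟨p0, hp0⟩ := hne
  -- from one witness to all witnesses
  have some_all : ∀ a b s : T, s ∈ P → br a b s ∈ P → SRel br P a b := by
    intro a b s hs h s' hs'
    have he : br a b s' = br (br a b s) s s' := by rw [hA, hL]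
    rw [he]; exact hPsub _ h _ hs _ hs'
  have hrefl : ∀ a : T, SRel br P a a := by
    intro a s hs; rw [hL]; exact hs
  have hsymm : ∀ a b : T, SRel br P a b → SRel br P b a := by
    intro a b h
    refine some_all _ _ (br a b p0) (h p0 hp0) ?_
    have he : br b a (br a b p0) = p0 := by rw [← hA, hR, hL]
    rw [he]; exact hp0
  have htrans : ∀ a b c : T, SRel br P a b → SRel br P b c → SRel br P a c := by
    intro a b c hab hbc s hs
    have he : br a c s = br a b (br b c s) := by rw [← hA, hR]
    rw [he]; exact hab _ (hbc _ hs)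
  have hshift : ∀ x y z : T, SRel br P x y → SRel br P (br x y z) z := by
    intro x y z h s hs
    have he : br (br x y z) z s = br x y s := by rw [hA, hL]
    rw [he]; exact h s hs
  have claim' : ∀ z u v w : T, br z (br u v z) w = br v u w := by
    intro z u v w
    have hz : z = br v u (br u v z) := by rw [← hA, hR, hL]
    calc br z (br u v z) w
        = br (br v u (br u v z)) (br u v z) w := by rw [← hz]
      _ = br v u (br (br u v z) (br u v z) w) := by rw [hA]
      _ = br v u w := by rw [hL]
  -- key membership lemma: if s ∼ e then p·e⁻¹·s ∈ P (in heap terms)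
  have memP : ∀ e s : T, SRel br P s e → ∀ p ∈ P, br p e s ∈ P := by
    intro e s hse p hp
    have hkP : br s e p ∈ P := hse p hp
    have h1 : br (br s e p) (br p e (br s e p)) p = e := by rw [claim', hR]
    have h2 : br (br s e p) p e = s := by rw [hA, hL, hR]
    have h3 : br (br (br p e (br s e p)) p (br s e p)) (br p e (br s e p)) p
        = br p e s := by rw [hA, h1, hA, h2]
    rw [← h3]
    exact hPnorm (br p e (br s e p)) p hp (br s e p) hkP
  constructor
  · intro hcong
    refine ⟨⟨p0, hp0⟩, ⟨hPsub, hPnorm⟩, fun a => ?_⟩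
    have hsub : IsSubHeap br (Cls br P a) := by
      intro x hx y hy z hz
      exact htrans _ _ _ (hshift x y z (htrans _ _ _ hx (hsymm _ _ hy))) hz
    refine ⟨⟨hsub, ?_⟩, ?_, ?_⟩
    · -- normality of the class
      intro t e he s hs
      have hse : SRel br P s e := htrans _ _ _ hs (hsymm _ _ he)
      have hkey : br (br (br t e s) t e) e p0 ∈ P := by
        have h1 : br (br (br t e s) t e) e p0 = br (br t e s) t p0 := by
          rw [hA, hL]
        have h2 : br t e s = br t p0 (br p0 e s) := by rw [← hA, hR]
        rw [h1, h2]
        exact hPnorm t p0 hp0 _ (memP e s hse p0 hp0)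
      exact htrans _ _ _ (some_all _ _ p0 hp0 hkey) he
    · -- left closedness of the class
      intro s hs s' hs' t
      have h : SRel br P (t * s') (t * s) :=
        hcong t t s' s (hrefl t) (htrans _ _ _ hs' (hsymm _ _ hs))
      exact htrans _ _ _ (hshift _ _ s h) hs
    · -- right closedness of the class
      intro s hs s' hs' t
      have h : SRel br P (s' * t) (s * t) :=
        hcong s' s t t (htrans _ _ _ hs' (hsymm _ _ hs)) (hrefl t)
      exact htrans _ _ _ (hshift _ _ s h) hs
  · rintro ⟨-, -, hcls⟩ a b c d hab hcd
    have h1 : SRel br P (a * c) (a * d) := by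
      have hw : br (a * c) (a * d) d ∈ Cls br P d :=
        (hcls d).2.1 d (hrefl d) c hcd a
      intro s hs
      have h := hw s hs
      rwa [hA, hL] at h
    have h2 : SRel br P (a * d) (b * d) := by
      have hw : br (a * d) (b * d) b ∈ Cls br P b :=
        (hcls b).2.2 b (hrefl b) a hab d
      intro s hs
      have h := hw s hs
      rwa [hA, hL] at h
    exact htrans _ _ _ h1 h2
end

section
/- Let B be a skew-ring. An element e ∈ B is a left absorber in the associated near-truss T(B) (i.e. a·e = e for all a ∈ B) if and only if u := 1 - e + 1 is a unit in B (i.e. a·u = a + u + a for all a ∈ B). Consequently the assignment e ↦ 1 - e + 1, with inverse u ↦ 1 - u + 1, is a one-to-one correspondence between left absorbers in T(B) and units in B. -/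
/-- Let `B` be a skew-ring: `(B,+)` a group, `(B,·)` a monoid, with the
distributive law `a·(b+c) = a·b - a + a·c`.  An element `e` is a left absorber
in the associated near-truss `T(B)` iff `u := 1 - e + 1` is a unit in `B`
(i.e. `a·u = a + u + a` for all `a`).  Moreover the assignment `e ↦ 1 - e + 1`
is an involution, so it gives a one-to-one correspondence between left
absorbers in `T(B)` and units in `B`. -/
theorem skewRing_leftAbsorber_iff_unit {B : Type*} [AddGroup B] [Monoid B]
    (hdistrib : ∀ a b c : B, a * (b + c) = a * b - a + a * c) :
    (∀ e : B, (∀ a : B, a * e = e) ↔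
      (∀ a : B, a * (1 - e + 1) = a + (1 - e + 1) + a)) ∧
    (∀ e : B, 1 - (1 - e + 1) + 1 = e) := by
  -- First: a * 0 = a for all a.
  have h0 : ∀ a : B, a * 0 = a := by
    intro a
    have h := hdistrib a 0 0
    rw [add_zero, sub_eq_add_neg, add_assoc] at h
    -- h : a * 0 = a * 0 + (-a + a * 0)
    have h2 : a * 0 + 0 = a * 0 + (-a + a * 0) := by rw [add_zero]; exact h
    have h3 := add_left_cancel h2
    -- h3 : 0 = -a + a * 0
    have h4 : -a + a * 0 = 0 := h3.symm
    have := neg_add_eq_zero.mp h4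
    exact this.symm
  -- Hence 1 = 0.
  have h10 : (1 : B) = 0 := (h0 1).symm.trans (one_mul 0)
  -- a * (-e) = a - a * e + a
  have hneg : ∀ a e : B, a * (-e) = a - a * e + a := by
    intro a e
    have h := hdistrib a e (-e)
    rw [add_neg_cancel, h0] at h
    -- h : a = a * e - a + a * (-e)
    have h' : a * e - a + a * (-e) = a := h.symm
    have h2 : a * (-e) = -(a * e - a) + a := eq_neg_add_of_add_eq h'
    rw [neg_sub] at h2
    rw [h2, sub_eq_add_neg, add_assoc]
  constructor
  · intro e
    have hu : (1 : B) - e + 1 = -e := by rw [h10, zero_sub, add_zero]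
    rw [hu]
    constructor
    · intro habs a
      rw [hneg a e, habs a, sub_eq_add_neg]
    · intro hunit a
      have h := (hneg a e).symm.trans (hunit a)
      -- h : a - a * e + a = a + -e + a
      have h2 := add_right_cancel h
      rw [sub_eq_add_neg] at h2
      have h3 := add_left_cancel h2
      exact neg_injective h3
  · intro e
    rw [h10]
    simp
end

section
/- Let B be a skew brace with multiplicative identity 1 and let P be a non-empty subset of B. Then P is a paragon in the associated near-truss T(B) if and only if for every p ∈ P the set P_p^1 := {x - p + 1 : x ∈ P} is an ideal in B. -/
/-- An ideal in a skew brace `B`: `(I,+)` is a normal subgroup of `(B,+)`,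
`a·I = I·a` for all `a`, and `a·b - a ∈ I` for all `a ∈ B`, `b ∈ I`. -/
def IsSkewBraceIdeal {B : Type*} [AddGroup B] [Group B] (I : Set B) : Prop :=
  (0 : B) ∈ I ∧ (∀ x ∈ I, ∀ y ∈ I, x + y ∈ I) ∧ (∀ x ∈ I, -x ∈ I) ∧
  (∀ a : B, ∀ x ∈ I, a + x - a ∈ I) ∧
  (∀ a : B, (fun x => a * x) '' I = (fun x => x * a) '' I) ∧
  (∀ a : B, ∀ b ∈ I, a * b - a ∈ I)

/-- For a skew brace `B` with multiplicative identity `1`, a non-empty subset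
`P ⊆ B` is a paragon in the associated near-truss `T(B)` (heap operation
`[x,y,z] = x - y + z`) iff for every `p ∈ P` the set
`P_p^1 = {x - p + 1 : x ∈ P}` is an ideal in `B`. -/
theorem skewBrace_paragon_iff_ideal {B : Type*} [AddGroup B] [Group B]
    (hdistrib : ∀ a b c : B, a * (b + c) = a * b - a + a * c)
    (P : Set B) (hne : P.Nonempty) :
    IsParagon (fun x y z : B => x - y + z) P ↔
      ∀ p ∈ P, IsSkewBraceIdeal {x : B | ∃ q ∈ P, x = q - p + 1} := by
  -- basic consequences of the distributive law
  have hmul0 : ∀ a : B, a * 0 = a := by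
    intro a
    have h := hdistrib a 0 0
    rw [add_zero] at h
    have h' : a * 0 + 0 = a * 0 + (-a + a * 0) := by
      rw [add_zero, ← add_assoc, ← sub_eq_add_neg]; exact h
    have h2 := add_left_cancel h'
    exact (neg_add_eq_zero.mp h2.symm).symm
  have h10 : (1 : B) = 0 := by
    have h := hmul0 1
    rw [one_mul] at h
    exact h.symm
  have hmem : ∀ p x : B, x ∈ {y : B | ∃ q ∈ P, y = q - p + 1} ↔ x + p ∈ P := by
    intro p x
    simp only [Set.mem_setOf_eq, h10, add_zero]
    constructor
    · rintro ⟨q, hq, rfl⟩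
      simpa using hq
    · intro hx
      exact ⟨x + p, hx, by simp⟩
  constructor
  · rintro ⟨-, ⟨hsub, hnorm⟩, hcls⟩ p hp
    -- the λ-type condition : t * x - t ∈ I
    have hlam : ∀ t x : B, x + p ∈ P → (t * x - t) + p ∈ P := by
      intro t x hx
      have hLC := (hcls p).2.1
      have hpc : p ∈ Cls (fun x y z : B => x - y + z) P p := by
        simp only [Cls, SRel, Set.mem_setOf_eq]
        intro s hs
        simpa using hs
      have hxc : x + p ∈ Cls (fun x y z : B => x - y + z) P p := by
        simp only [Cls, SRel, Set.mem_setOf_eq]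
        intro s hs
        have := hsub (x + p) hx p hp s hs
        simpa using this
      have h1 := hLC p hpc (x + p) hxc t
      simp only [Cls, SRel, Set.mem_setOf_eq] at h1
      have h2 := h1 p hp
      have h3 : t * (x + p) - t * p + p ∈ P := by
        simpa using h2
      rw [hdistrib t x p] at h3
      simpa [sub_eq_add_neg, add_assoc] using h3
    -- translation invariance of right multiplication
    have hA : ∀ u v t : B, (u - v) + p ∈ P → (u * t - v * t) + p ∈ P := by
      intro u v t huv
      have hRC := (hcls v).2.2
      have hvc : v ∈ Cls (fun x y z : B => x - y + z) P v := by
        simp only [Cls, SRel, Set.mem_setOf_eq]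
        intro s hs
        simpa using hs
      have huc : u ∈ Cls (fun x y z : B => x - y + z) P v := by
        simp only [Cls, SRel, Set.mem_setOf_eq]
        intro s hs
        have := hsub ((u - v) + p) huv p hp s hs
        simpa [sub_eq_add_neg, add_assoc] using this
      have h1 := hRC v hvc u huc t
      simp only [Cls, SRel, Set.mem_setOf_eq] at h1
      have h2 := h1 p hp
      simpa [sub_eq_add_neg, add_assoc] using h2
    refine ⟨?_, ?_, ?_, ?_, ?_, ?_⟩
    · exact (hmem p 0).mpr (by simpa using hp)
    · intro x hx y hy
      rw [hmem] at hx hy ⊢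
      have := hsub (x + p) hx p hp (y + p) hy
      simpa [sub_eq_add_neg, add_assoc] using this
    · intro x hx
      rw [hmem] at hx ⊢
      have := hsub p hp (x + p) hx p hp
      simpa [sub_eq_add_neg, add_assoc] using this
    · intro a x hx
      rw [hmem] at hx ⊢
      have := hnorm (a + p) p hp (x + p) hx
      simpa [sub_eq_add_neg, add_assoc] using this
    · intro a
      ext y
      simp only [Set.mem_image]
      constructor
      · rintro ⟨i, hi, rfl⟩
        refine ⟨a * i * a⁻¹, ?_, by rw [inv_mul_cancel_right]⟩
        rw [hmem] at hi ⊢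
        have h1 : (a * i - a) + p ∈ P := hlam a i hi
        have h2 := hA (a * i) a a⁻¹ h1
        rw [mul_inv_cancel, h10, sub_zero] at h2
        exact h2
      · rintro ⟨i, hi, rfl⟩
        refine ⟨a⁻¹ * (i * a), ?_, by rw [mul_inv_cancel_left]⟩
        rw [hmem] at hi ⊢
        have h0 : (i - 0) + p ∈ P := by simpa using hi
        have h1 := hA i 0 a h0
        rw [show (0 : B) * a = a by rw [← h10, one_mul]] at h1
        have h2 := hlam a⁻¹ (i * a - a) h1
        have hd := hdistrib a⁻¹ (i * a - a) a
        rw [sub_add_cancel] at hd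
        rw [hd, inv_mul_cancel, h10, add_zero]
        exact h2
    · intro a b hb
      rw [hmem] at hb ⊢
      exact hlam a b hb
  · intro hid
    obtain ⟨p₀, hp₀⟩ := hne
    obtain ⟨hI0, hIadd, hIneg, hIconj, hIcomm, hIlam⟩ := hid p₀ hp₀
    have hmemP : ∀ z : B, z ∈ P ↔ z - p₀ ∈ {y : B | ∃ q ∈ P, y = q - p₀ + 1} := by
      intro z
      rw [hmem]
      simp
    -- every additive translate of I is realised by right multiplication
    have hB1 : ∀ u : B, ∀ k ∈ {y : B | ∃ q ∈ P, y = q - p₀ + 1},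
        ∃ j ∈ {y : B | ∃ q ∈ P, y = q - p₀ + 1}, j * u = k + u := by
      intro u k hk
      have hi : u⁻¹ * (k + u) ∈ {y : B | ∃ q ∈ P, y = q - p₀ + 1} := by
        have hd := hdistrib u⁻¹ k u
        rw [inv_mul_cancel, h10, add_zero] at hd
        rw [hd]
        exact hIlam u⁻¹ k hk
      have himg : u * (u⁻¹ * (k + u)) ∈ (fun x => u * x) '' {y : B | ∃ q ∈ P, y = q - p₀ + 1} :=
        ⟨_, hi, rfl⟩
      rw [hIcomm u] at himg
      obtain ⟨j, hj, hju⟩ := himg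
      refine ⟨j, hj, ?_⟩
      simpa [mul_inv_cancel_left] using hju
    have hB2 : ∀ u : B, ∀ j ∈ {y : B | ∃ q ∈ P, y = q - p₀ + 1},
        j * u - u ∈ {y : B | ∃ q ∈ P, y = q - p₀ + 1} := by
      intro u j hj
      have himg : j * u ∈ (fun x => x * u) '' {y : B | ∃ q ∈ P, y = q - p₀ + 1} :=
        ⟨j, hj, rfl⟩
      rw [← hIcomm u] at himg
      obtain ⟨i, hi, hiu⟩ := himg
      rw [← hiu]
      exact hIlam u i hi
    -- description of the equivalence classes
    have hclsm : ∀ a z : B, z ∈ Cls (fun x y z : B => x - y + z) P a ↔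
        z - a ∈ {y : B | ∃ q ∈ P, y = q - p₀ + 1} := by
      intro a z
      simp only [Cls, SRel, Set.mem_setOf_eq]
      constructor
      · intro h
        have := h p₀ hp₀
        exact (hmem p₀ _).mpr (by simpa using this)
      · intro h s hs
        rw [hmemP] at hs ⊢
        have := hIadd _ h _ hs
        simpa [sub_eq_add_neg, add_assoc] using this
    -- any coset of I is a normal sub-heap
    have hkey : ∀ (a : B) (S : Set B),
        (∀ z, z ∈ S ↔ z - a ∈ {y : B | ∃ q ∈ P, y = q - p₀ + 1}) →
        IsNormalSubHeap (fun x y z : B => x - y + z) S := by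
      intro a S hS
      constructor
      · intro x hx y hy z hz
        rw [hS] at hx hy hz ⊢
        have h1 := hIneg _ hy
        have h2 := hIadd _ hx _ h1
        have h3 := hIadd _ h2 _ hz
        have heq : (x - y + z) - a = (x - a) + (-(y - a)) + (z - a) := by
          simp [sub_eq_add_neg, add_assoc]
        rw [heq]
        exact h3
      · intro b e he s hs
        rw [hS] at he hs ⊢
        have m1 := hIadd _ (hIneg _ he) _ hs
        have m2 := hIconj (-a) _ m1
        have m3 := hIconj b _ m2
        have m4 := hIadd _ m3 _ he
        have heq : ((b - e + s) - b + e) - a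
            = (b + (-a + (-(e - a) + (s - a)) - -a) - b) + (e - a) := by
          simp [sub_eq_add_neg, add_assoc]
        rw [heq]
        exact m4
    refine ⟨⟨p₀, hp₀⟩, hkey p₀ P hmemP, ?_⟩
    intro a
    refine ⟨hkey a _ (hclsm a), ?_, ?_⟩
    · intro s hs s' hs' t
      rw [hclsm] at hs hs' ⊢
      have hk : s' - s ∈ {y : B | ∃ q ∈ P, y = q - p₀ + 1} := by
        have := hIadd _ hs' _ (hIneg _ hs)
        simpa [sub_eq_add_neg, add_assoc] using this
      have hd := hdistrib t (s' - s) s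
      rw [sub_add_cancel] at hd
      have h1 : t * s' - t * s ∈ {y : B | ∃ q ∈ P, y = q - p₀ + 1} := by
        rw [hd]
        have := hIlam t _ hk
        simpa [sub_eq_add_neg, add_assoc] using this
      have := hIadd _ h1 _ hs
      simpa [sub_eq_add_neg, add_assoc] using this
    · intro s hs s' hs' t
      rw [hclsm] at hs hs' ⊢
      have hk : s' - s ∈ {y : B | ∃ q ∈ P, y = q - p₀ + 1} := by
        have := hIadd _ hs' _ (hIneg _ hs)
        simpa [sub_eq_add_neg, add_assoc] using this
      obtain ⟨j, hj, hjs⟩ := hB1 s _ hk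
      rw [sub_add_cancel] at hjs
      have h1 : s' * t - s * t ∈ {y : B | ∃ q ∈ P, y = q - p₀ + 1} := by
        rw [← hjs, mul_assoc]
        exact hB2 (s * t) j hj
      have := hIadd _ h1 _ hs
      simpa [sub_eq_add_neg, add_assoc] using this
end

section
/- If a left-closed normal sub-heap P of a pre-truss T contains a non-empty left ideal I, then P is itself a left ideal, i.e. t·p ∈ P for all t ∈ T and p ∈ P. -/
/-- If a left-closed normal sub-heap `P` of a pre-truss `T` contains a non-empty
left ideal `I`, then `P` is itself a left ideal. -/
theorem leftClosed_containing_leftIdeal {T : Type*} [Mul T] (br : T → T → T → T)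
    (hH : IsHeap br) (hmul : ∀ a b c : T, a * b * c = a * (b * c))
    (P : Set T) (hP : IsNormalSubHeap br P) (hPl : LeftClosed br P)
    (I : Set T) (hIne : I.Nonempty) (hI : IsLeftIdeal br I) (hIP : I ⊆ P) :
    IsLeftIdeal br P := by
  obtain ⟨assoc, ml, mr⟩ := hH
  obtain ⟨i, hi⟩ := hIne
  obtain ⟨-, -, hImul⟩ := hI
  refine ⟨⟨i, hIP hi⟩, hP, ?_⟩
  intro t p hp
  have h1 : br (t * p) (t * i) i ∈ P := hPl i (hIP hi) p hp t
  have h2 : t * i ∈ P := hIP (hImul t i hi)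
  have h3 : br (br (t * p) (t * i) i) i (t * i) ∈ P := hP.1 _ h1 _ (hIP hi) _ h2
  have he : br (br (t * p) (t * i) i) i (t * i) = t * p := by
    rw [assoc, ml, mr]
  rwa [he] at h3
end

section
/- Let T be a pre-truss and P a paragon in T. The quotient T/P has a left absorber (i.e. there exists t ∈ T such that s·t ∼_P t for all s ∈ T) if and only if there exist a ∈ P and t ∈ T such that P_a^t := {[q,a,t] : q ∈ P} is a left ideal of T. -/
/-- For a paragon `P` in a pre-truss `T`, the quotient `T/P` has a left absorber
iff there exist `a ∈ P` and `t ∈ T` such that `P_a^t = {[q,a,t] : q ∈ P}` is a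
left ideal of `T`. -/
theorem quotient_has_leftAbsorber_iff {T : Type*} [Mul T] (br : T → T → T → T)
    (hH : IsHeap br) (hmul : ∀ a b c : T, a * b * c = a * (b * c))
    (P : Set T) (hP : IsParagon br P) :
    (∃ t : T, ∀ s : T, SRel br P (s * t) t) ↔
      (∃ a ∈ P, ∃ t : T, IsLeftIdeal br {x : T | ∃ q ∈ P, x = br q a t}) := by
  obtain ⟨assoc, mal1, mal2⟩ := hH
  obtain ⟨hne, ⟨hsub, hnorm⟩, hcls⟩ := hP
  constructor
  · rintro ⟨t, ht⟩
    obtain ⟨a, ha⟩ := hne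
    refine ⟨a, ha, t, ?_⟩
    have hset : {x : T | ∃ q ∈ P, x = br q a t} = Cls br P t := by
      ext x
      constructor
      · rintro ⟨q, hq, rfl⟩ s hs
        rw [assoc, mal1]
        exact hsub q hq a ha s hs
      · intro hx
        refine ⟨br x t a, hx a ha, ?_⟩
        rw [assoc, mal1, mal2]
    rw [hset]
    refine ⟨⟨t, fun s hs => by rw [mal1]; exact hs⟩, (hcls t).1, ?_⟩
    intro s i hi
    have htc : t ∈ Cls br P t := fun p hp => by rw [mal1]; exact hp
    have hx : br (s * i) (s * t) t ∈ Cls br P t := (hcls t).2.1 t htc i hi s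
    intro p hp
    have key : s * i = br (br (s * i) (s * t) t) t (s * t) := by
      rw [assoc, mal1, mal2]
    have key2 : br (s * i) t p =
        br (br (s * i) (s * t) t) t (br (s * t) t p) := by
      conv_lhs => rw [key]
      rw [assoc]
    rw [key2]
    exact hx _ (ht s p hp)
  · rintro ⟨a, ha, t, ⟨hIne, hInorm, hImul⟩⟩
    have htI : t ∈ {x : T | ∃ q ∈ P, x = br q a t} := ⟨a, ha, (mal1 a t).symm⟩
    refine ⟨t, fun s p hp => ?_⟩
    obtain ⟨q, hq, heq⟩ := hImul s t htI
    rw [heq, assoc, mal1]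
    exact hsub q hq a ha p hp
end

section
/- If I is a paragon in a pre-truss T that is also a right ideal, then for every e ∈ T∖I and every a ∈ I, the set I_a^e := {[q,a,e] : q ∈ I} is not a left ideal of T. -/
/-- If `I` is a paragon in a pre-truss `T` that is also a right ideal, then for
every `e ∈ T∖I` and every `a ∈ I`, the set `I_a^e = {[q,a,e] : q ∈ I}` is not a
left ideal of `T`. -/
theorem translate_not_leftIdeal {T : Type*} [Mul T] (br : T → T → T → T)
    (hH : IsHeap br) (hmul : ∀ a b c : T, a * b * c = a * (b * c))
    (I : Set T) (hI : IsParagon br I) (hIr : IsRightIdeal br I)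
    (e : T) (he : e ∉ I) (a : T) (ha : a ∈ I) :
    ¬ IsLeftIdeal br {x : T | ∃ q ∈ I, x = br q a e} := by
  rintro ⟨-, -, hJmul⟩
  obtain ⟨hassoc, hmal1, hmal2⟩ := hH
  -- `e = [a,a,e]` belongs to the translated set
  have heJ : e ∈ {x : T | ∃ q ∈ I, x = br q a e} := ⟨a, ha, (hmal1 a e).symm⟩
  -- left-ideal property with `t = a` gives `a*e` in the translated set
  obtain ⟨q, hq, hqe⟩ := hJmul a e heJ
  -- right ideal gives `a*e ∈ I`
  have h2 : a * e ∈ I := hIr.2.2 e a ha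
  rw [hqe] at h2
  -- `I` is a sub-heap, so `e = [a,q,[q,a,e]] ∈ I`, contradiction
  have hsub : IsSubHeap br I := hI.2.1.1
  have h3 : br a q (br q a e) ∈ I := hsub a ha q hq _ h2
  rw [← hassoc, hmal2, hmal1] at h3
  exact he h3
end

section
/- Let T be a near-truss and a ∈ T. If there exists an element c ∈ T such that a·b ≠ a·c for all b ∈ T with b ≠ c, then for every c' ∈ T and every b ∈ T with b ≠ c', a·b ≠ a·c'. Consequently, an element a of T which is not an absorber is left regular if and only if there exists one element c with a·b ≠ a·c for all b ≠ c. -/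
/-- In a near-truss `T`: if there exists `c` with `a·b ≠ a·c` for all `b ≠ c`,
then for every `c'` and every `b ≠ c'`, `a·b ≠ a·c'`.  Consequently, an element
`a` which is not an absorber is left regular iff there exists one such `c`. -/
theorem leftRegular_iff_exists {T : Type*} [Mul T] (br : T → T → T → T)
    (hH : IsHeap br) (hmul : ∀ a b c : T, a * b * c = a * (b * c))
    (hdistrib : ∀ a b c d : T, a * br b c d = br (a * b) (a * c) (a * d))
    (a : T) :
    ((∃ c : T, ∀ b : T, b ≠ c → a * b ≠ a * c) →
      ∀ c' : T, ∀ b : T, b ≠ c' → a * b ≠ a * c') ∧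
    (¬ (∀ t : T, t * a = a ∧ a * t = a) →
      ((∀ b c : T, b ≠ c → a * b ≠ a * c) ↔
        ∃ c : T, ∀ b : T, b ≠ c → a * b ≠ a * c)) := by
  obtain ⟨hassoc, hml, hmr⟩ := hH
  have key : (∃ c : T, ∀ b : T, b ≠ c → a * b ≠ a * c) →
      ∀ c' : T, ∀ b : T, b ≠ c' → a * b ≠ a * c' := by
    rintro ⟨c, hc⟩ c' b hb heq
    apply hb
    have h1 : a * br b c' c = a * c := by
      rw [hdistrib, heq, hml]
    have h2 : br b c' c = c := by
      by_contra h
      exact hc _ h h1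
    have h3 : br (br b c' c) c c' = br c c c' := by rw [h2]
    rw [hassoc, hml, hmr] at h3
    exact h3
  refine ⟨key, fun _ => ⟨fun h => ⟨a, fun b hb => h b a hb⟩, fun h b c hbc => key h c b hbc⟩⟩
end

section
/- Let T be a pre-truss and P ⊊ T a completely prime paragon. Then for every p ∈ P and all left absorbers a,a' ∈ T (i.e. t·a = a and t·a' = a' for all t ∈ T), one has P_p^a = P_p^{a'}, where P_p^x := {[q,p,x] : q ∈ P}; equivalently, any two left absorbers of T are ∼_P-equivalent. -/
/-- For a paragon `P`, `p ∈ P` and `a ∈ T`, the set `P_p^a = {[q,p,a] : q ∈ P}`. -/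
def Ppa {T : Type*} (br : T → T → T → T) (P : Set T) (p a : T) : Set T :=
  {x | ∃ q ∈ P, x = br q p a}

/-- A completely prime paragon. -/
def CompletelyPrime {T : Type*} [Mul T] (br : T → T → T → T) (P : Set T) : Prop :=
  IsParagon br P ∧ ∀ p ∈ P, ∀ a b c : T,
    (br (a * b) (a * c) p ∈ P → IsIdeal br (Ppa br P p a) ∨ br b c p ∈ P) ∧
    (br (b * a) (c * a) p ∈ P → IsIdeal br (Ppa br P p a) ∨ br b c p ∈ P)

/-- If `P ⊊ T` is a completely prime paragon in a pre-truss `T`, then for every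
`p ∈ P` and all left absorbers `a, a' ∈ T`, one has `P_p^a = P_p^{a'}`. -/
theorem completelyPrime_leftAbsorbers {T : Type*} [Mul T] (br : T → T → T → T)
    (hH : IsHeap br) (hmul : ∀ a b c : T, a * b * c = a * (b * c))
    (P : Set T) (hprime : CompletelyPrime br P) (hproper : P ≠ Set.univ) :
    ∀ p ∈ P, ∀ a a' : T, (∀ t : T, t * a = a) → (∀ t : T, t * a' = a') →
      Ppa br P p a = Ppa br P p a' := by
  intro p hp a a' ha ha'
  obtain ⟨hassoc, hml, hmr⟩ := hH
  obtain ⟨⟨hPne, ⟨hPsub, hPn⟩, hcls⟩, hCP⟩ := hprime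
  obtain ⟨x, hx⟩ : ∃ x, x ∉ P := by
    by_contra h; push_neg at h; exact hproper (Set.eq_univ_of_forall h)
  have key : ∀ b : T, (∀ t, t * b = b) → IsIdeal br (Ppa br P p b) := by
    intro b hb
    have h1 : br (x * b) (p * b) p ∈ P := by rw [hb, hb, hml]; exact hp
    rcases (hCP p hp b x p).2 h1 with h | h
    · exact h
    · rw [hmr] at h; exact absurd h hx
  have mem : ∀ b b' : T, (∀ t, t * b = b) → IsIdeal br (Ppa br P p b') →
      ∃ q ∈ P, b = br q p b' := by
    intro b b' hb hI
    have hb' : b' ∈ Ppa br P p b' := ⟨p, hp, (hml p b').symm⟩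
    have h2 := (hI.2.2 b b' hb').2
    rw [hb b'] at h2
    exact h2
  have sub : ∀ b b' : T, (∀ t, t * b = b) → IsIdeal br (Ppa br P p b') →
      Ppa br P p b ⊆ Ppa br P p b' := by
    intro b b' hb hI y hy
    obtain ⟨q, hq, rfl⟩ := hy
    obtain ⟨q0, hq0, hbe⟩ := mem b b' hb hI
    exact ⟨br q p q0, hPsub q hq p hp q0 hq0, by rw [hassoc, ← hbe]⟩
  exact Set.Subset.antisymm (sub a a' ha (key a' ha')) (sub a' a ha' (key a ha))
end
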